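/- arXiv:0904.3827 — 2 statements merged into one kernel-verified Lean document; each statement's English description precedes it below -/
import Mathlib

section
/- Assume k is infinite and that the map C ↦ β_C from L/H to K is injective. Let 𝔐_β be the kernel of the evaluation homomorphism from the multivariate polynomial ring k[(y_C)_{C ∈ L/H}] to K sending y_C to β_C, and let the group Perm(L/H) of permutations of L/H act on this ring by permuting the variables. Then {π ∈ Perm(L/H) : π·𝔐_β = 𝔐_β} (the Galois group of the family (β_C) over k) equals the image of the homomorphism G → Perm(L/H) sending g ∈ G to the permutation C ↦ gC given by left multiplication. -/
open MvPolynomial Polynomial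

variable (k : Type*) {K : Type*} [Field k] [Field K] [Algebra k K] {n : ℕ}

/-- The ideal of `α`-relations. -/
noncomputable def relIdeal (α : Fin n → K) : Ideal (MvPolynomial (Fin n) k) :=
  RingHom.ker (MvPolynomial.aeval α : MvPolynomial (Fin n) k →ₐ[k] K)

/-- The Galois group of `α` over `k`: permutations stabilizing the ideal of relations. -/
def galoisGroup (α : Fin n → K) : Subgroup (Equiv.Perm (Fin n)) where
  carrier := {σ | MvPolynomial.rename ⇑σ '' (relIdeal k α : Set (MvPolynomial (Fin n) k))
      = (relIdeal k α : Set (MvPolynomial (Fin n) k))}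
  one_mem' := by
    have h : ∀ p : MvPolynomial (Fin n) k, rename ⇑(1 : Equiv.Perm (Fin n)) p = p := by
      intro p; simp [Equiv.Perm.coe_one, rename_id]
    simp only [Set.mem_setOf_eq]
    rw [Set.image_congr' h]
    exact Set.image_id _
  mul_mem' := by
    intro σ τ hσ hτ
    simp only [Set.mem_setOf_eq] at *
    have h : ∀ p : MvPolynomial (Fin n) k,
        rename ⇑(σ * τ) p = rename ⇑σ (rename ⇑τ p) := by
      intro p; rw [rename_rename]; rfl
    rw [Set.image_congr' h]
    calc (fun p => rename ⇑σ (rename ⇑τ p)) '' (relIdeal k α : Set (MvPolynomial (Fin n) k))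
        = rename ⇑σ '' (rename ⇑τ '' (relIdeal k α : Set (MvPolynomial (Fin n) k))) :=
          (Set.image_comp _ _ _)
      _ = _ := by rw [hτ, hσ]
  inv_mem' := by
    intro σ hσ
    simp only [Set.mem_setOf_eq] at *
    conv_lhs => rw [← hσ]
    rw [← Set.image_comp]
    have h : ∀ p : MvPolynomial (Fin n) k,
        (rename ⇑σ⁻¹ ∘ rename ⇑σ) p = p := by
      intro p
      simp only [Function.comp_apply, rename_rename]
      have : (⇑σ⁻¹ ∘ ⇑σ) = id := by
        funext i; simp
      rw [this, rename_id]; rfl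
    rw [Set.image_congr' h]
    exact Set.image_id _

/-! Since `K` is the splitting field of `f`, it is normal over `k`, and then a permutation `π`
of the indices of a family `γ` in `K` stabilizes its ideal of relations exactly when some
`k`-automorphism `Φ` of `K` satisfies `Φ (γ i) = γ (π i)`: a substitution preserving all relations
is a `k`-homomorphism `k[γ] → K`, which extends to `K` by normality. Every automorphism permutes
the roots `α`, by some `g` which then lies in `G ≤ L`, and it sends `β_C` to `β_{gC}`; injectivity
of `β` identifies the permutation of the cosets with left multiplication by `g`. -/

namespace MvPolynomial

variable {R ι : Type*} [CommSemiring R]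

theorem rename_image_eq_of_forall_rename_mem_iff (π : Equiv.Perm ι) (S : Set (MvPolynomial ι R))
    (h : ∀ Q, rename π Q ∈ S ↔ Q ∈ S) : rename π '' S = S := by
  have hπ : ∀ Q : MvPolynomial ι R, rename π (rename π.symm Q) = Q := fun Q => by
    rw [rename_rename, Equiv.self_comp_symm, rename_id_apply]
  ext Q
  refine ⟨?_, fun hQ => ⟨rename π.symm Q, (h _).1 ((hπ Q).symm ▸ hQ), hπ Q⟩⟩
  rintro ⟨Q, hQ, rfl⟩
  exact (h Q).2 hQ

end MvPolynomial

section KernelOfEvaluation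

variable {k} {ι : Type*}

theorem exists_algHom_apply_eq_of_ker_aeval_le [Normal k K] {γ δ : ι → K}
    (h : RingHom.ker (aeval γ : MvPolynomial ι k →ₐ[k] K) ≤
      RingHom.ker (aeval δ : MvPolynomial ι k →ₐ[k] K)) :
    ∃ Φ : K →ₐ[k] K, ∀ i, Φ (γ i) = δ i := by
  set f : MvPolynomial ι k →ₐ[k] K := aeval γ
  let e := Ideal.quotientKerEquivRange f
  let χ : f.range →ₐ[k] K :=
    (Ideal.Quotient.liftₐ (RingHom.ker f) (aeval δ) fun _ ha => h ha).comp e.symm.toAlgHom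
  let F : IntermediateField k K :=
    Subalgebra.IsAlgebraic.toIntermediateField (S := f.range) fun x _ =>
      Algebra.IsAlgebraic.isAlgebraic x
  obtain ⟨Φ, hΦ⟩ := IntermediateField.exists_algHom_of_splits
    (fun s => normal_iff.mp ‹Normal k K› s) (show F →ₐ[k] K from χ)
  refine ⟨Φ, fun i => ?_⟩
  have hmem : γ i ∈ f.range := ⟨X i, aeval_X γ i⟩
  have he : e.symm ⟨γ i, hmem⟩ = Ideal.Quotient.mk (RingHom.ker f) (X i) := by
    rw [AlgEquiv.symm_apply_eq]
    ext
    simp [e, Ideal.quotientKerEquivRange, f]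
  calc Φ (γ i) = χ ⟨γ i, hmem⟩ := DFunLike.congr_fun hΦ (⟨γ i, hmem⟩ : F)
    _ = δ i := by
      simp only [χ, AlgHom.comp_apply, AlgEquiv.coe_toAlgHom, he]
      exact MvPolynomial.aeval_X δ i

theorem rename_mem_ker_aeval_iff_of_algHom (γ : ι → K) (π : Equiv.Perm ι) (Φ : K →ₐ[k] K)
    (hΦ : ∀ i, Φ (γ i) = γ (π i)) (Q : MvPolynomial ι k) :
    rename π Q ∈ RingHom.ker (aeval γ : MvPolynomial ι k →ₐ[k] K) ↔
      Q ∈ RingHom.ker (aeval γ : MvPolynomial ι k →ₐ[k] K) := by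
  have hΦQ : (aeval γ : MvPolynomial ι k →ₐ[k] K) (rename π Q) = Φ (aeval γ Q) := by
    rw [aeval_rename, comp_aeval_apply]
    simp only [Function.comp_def, hΦ]
  simp only [RingHom.mem_ker, hΦQ, map_eq_zero_iff Φ Φ.injective]

theorem rename_image_ker_aeval_eq_iff [Normal k K] (γ : ι → K) (π : Equiv.Perm ι) :
    rename π '' (RingHom.ker (aeval γ : MvPolynomial ι k →ₐ[k] K) : Set (MvPolynomial ι k)) =
        RingHom.ker (aeval γ : MvPolynomial ι k →ₐ[k] K) ↔
      ∃ Φ : K ≃ₐ[k] K, ∀ i, Φ (γ i) = γ (π i) := by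
  constructor
  · intro hπ
    have hle : RingHom.ker (aeval γ : MvPolynomial ι k →ₐ[k] K) ≤
        RingHom.ker (aeval (γ ∘ π) : MvPolynomial ι k →ₐ[k] K) := fun Q hQ => by
      rw [RingHom.mem_ker, ← aeval_rename]
      exact hπ.subset ⟨Q, hQ, rfl⟩
    obtain ⟨Φ, hΦ⟩ := exists_algHom_apply_eq_of_ker_aeval_le hle
    exact ⟨AlgEquiv.ofBijective Φ (Algebra.IsAlgebraic.algHom_bijective Φ), hΦ⟩
  · rintro ⟨Φ, hΦ⟩
    exact rename_image_eq_of_forall_rename_mem_iff π _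
      (rename_mem_ker_aeval_iff_of_algHom γ π Φ hΦ)

theorem mem_galoisGroup_iff [Normal k K] (α : Fin n → K) (g : Equiv.Perm (Fin n)) :
    g ∈ galoisGroup k α ↔ ∃ Φ : K ≃ₐ[k] K, ∀ i, Φ (α i) = α (g i) :=
  rename_image_ker_aeval_eq_iff α g

end KernelOfEvaluation

section SplittingPolynomial

variable {k} {ι : Type*} [Fintype ι] {α : ι → K} {f : k[X]}

theorem rootSet_eq_range_of_map_eq_prod
    (hf : f.map (algebraMap k K) = ∏ i, (Polynomial.X - Polynomial.C (α i))) :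
    f.rootSet K = Set.range α := by
  have hf0 : f ≠ 0 := by
    rintro rfl
    exact (monic_prod_of_monic Finset.univ _ fun i _ => monic_X_sub_C (α i)).ne_zero
      (hf.symm.trans (Polynomial.map_zero _))
  ext x
  rw [mem_rootSet, Polynomial.aeval_def, Polynomial.eval₂_eq_eval_map, hf, Polynomial.eval_prod,
    Finset.prod_eq_zero_iff]
  simp [hf0, sub_eq_zero, eq_comm]

theorem normal_of_map_eq_prod
    (hf : f.map (algebraMap k K) = ∏ i, (Polynomial.X - Polynomial.C (α i)))
    (hgen : Algebra.adjoin k (Set.range α) = ⊤) : Normal k K :=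
  have : IsSplittingField k K f :=
    ⟨hf ▸ Splits.prod fun _ _ => Splits.X_sub_C _, rootSet_eq_range_of_map_eq_prod hf ▸ hgen⟩
  Normal.of_isSplittingField f

theorem exists_perm_apply_eq_of_map_eq_prod
    (hf : f.map (algebraMap k K) = ∏ i, (Polynomial.X - Polynomial.C (α i)))
    (hinj : Function.Injective α) (Φ : K →ₐ[k] K) :
    ∃ g : Equiv.Perm ι, ∀ i, Φ (α i) = α (g i) := by
  have hroots := rootSet_eq_range_of_map_eq_prod hf
  have hroot : ∀ i, Φ (α i) ∈ Set.range α := fun i => by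
    obtain ⟨hf0, hαi⟩ := mem_rootSet.1 (hroots.symm ▸ Set.mem_range_self i : α i ∈ f.rootSet K)
    rw [← hroots]
    exact mem_rootSet.2 ⟨hf0, by rw [Polynomial.aeval_algHom_apply, hαi, map_zero]⟩
  choose g hg using hroot
  have hginj : Function.Injective g := fun a b hab => by
    have hΦab := congrArg α hab
    rw [hg, hg] at hΦab
    exact hinj (Φ.injective hΦab)
  exact ⟨Equiv.ofBijective g (Finite.injective_iff_bijective.mp hginj), fun i => (hg i).symm⟩

end SplittingPolynomial

section Resolvent

variable {k}

theorem resolventRoot_smul {ι : Type*} {α : ι → K} {L : Subgroup (Equiv.Perm ι)} {H : Subgroup L}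
    {P : MvPolynomial ι k} {β : L ⧸ H → K}
    (hβ : ∀ σ : L, β (QuotientGroup.mk σ) = aeval α (rename (σ : Equiv.Perm ι) P))
    (g : L) (Φ : K →ₐ[k] K) (hΦ : ∀ i, Φ (α i) = α ((g : Equiv.Perm ι) i)) (C : L ⧸ H) :
    β (g • C) = Φ (β C) := by
  obtain ⟨σ, rfl⟩ := QuotientGroup.mk_surjective C
  rw [MulAction.Quotient.smul_mk, hβ, hβ, smul_eq_mul, Subgroup.coe_mul, Equiv.Perm.coe_mul,
    ← rename_rename, aeval_rename, comp_aeval_apply]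
  simp only [Function.comp_def, hΦ]

end Resolvent

theorem galoisGroup_resolvent_eq_image
    (α : Fin n → K) (hinj : Function.Injective α)
    (hcoeff : ∀ m : ℕ, (∏ i : Fin n, (Polynomial.X - Polynomial.C (α i)) : K[X]).coeff m ∈
      (algebraMap k K).range)
    (hgen : Algebra.adjoin k (Set.range α) = ⊤)
    (H L : Subgroup (Equiv.Perm (Fin n))) (hGL : galoisGroup k α ≤ L)
    (P : MvPolynomial (Fin n) k)
    (β : (↥L ⧸ H.subgroupOf L) → K)
    (hβ : ∀ σ : ↥L, β (QuotientGroup.mk σ) =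
      MvPolynomial.aeval α (rename ⇑(σ : Equiv.Perm (Fin n)) P))
    (hβinj : Function.Injective β) :
    {π : Equiv.Perm (↥L ⧸ H.subgroupOf L) |
        rename ⇑π '' ((RingHom.ker (MvPolynomial.aeval β :
            MvPolynomial (↥L ⧸ H.subgroupOf L) k →ₐ[k] K)) :
          Set (MvPolynomial (↥L ⧸ H.subgroupOf L) k)) =
        ((RingHom.ker (MvPolynomial.aeval β :
            MvPolynomial (↥L ⧸ H.subgroupOf L) k →ₐ[k] K)) :
          Set (MvPolynomial (↥L ⧸ H.subgroupOf L) k))} =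
      {π : Equiv.Perm (↥L ⧸ H.subgroupOf L) |
        ∃ (g : Equiv.Perm (Fin n)) (hg : g ∈ galoisGroup k α),
          π = MulAction.toPerm (⟨g, hGL hg⟩ : ↥L)} := by
  obtain ⟨f, hf⟩ := (mem_lifts _).1 ((lifts_iff_coeff_lifts _).2 hcoeff)
  have : Normal k K := normal_of_map_eq_prod hf hgen
  ext π
  refine (rename_image_ker_aeval_eq_iff β π).trans ⟨?_, ?_⟩
  · rintro ⟨Φ, hΦ⟩
    obtain ⟨g, hg⟩ := exists_perm_apply_eq_of_map_eq_prod hf hinj Φ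
    have hgG : g ∈ galoisGroup k α := (mem_galoisGroup_iff α g).2 ⟨Φ, hg⟩
    refine ⟨g, hgG, Equiv.ext fun C => hβinj ?_⟩
    rw [← hΦ, MulAction.toPerm_apply, resolventRoot_smul hβ ⟨g, hGL hgG⟩ Φ hg,
      AlgEquiv.coe_toAlgHom]
  · rintro ⟨g, hg, rfl⟩
    obtain ⟨Φ, hΦ⟩ := (mem_galoisGroup_iff α g).1 hg
    exact ⟨Φ, fun C => (resolventRoot_smul hβ ⟨g, hGL hg⟩ Φ hΦ C).symm⟩
end

section
/- Let σ ∈ L, β = β_{σH}, and let O ⊆ L/H be the orbit of σH under left multiplication by G. If the restriction to O of the map C ↦ β_C is injective, then the intermediate field k⟮β⟯ generated by β over k equals the subfield of K fixed by all automorphisms Φ(g) with g ∈ G ∩ σHσ⁻¹; in particular, if G ∩ σHσ⁻¹ is the trivial group, then β is a primitive element of K over k, i.e. k⟮β⟯ = K. -/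
open MvPolynomial Polynomial

variable (k : Type*) {K : Type*} [Field k] [Field K] [Algebra k K] {n : ℕ}

/-- The subfield of `K` fixed by the automorphisms `Φ σ` for `σ ∈ H`. -/
def fixedIF (Φ : Equiv.Perm (Fin n) → (K ≃ₐ[k] K)) (H : Subgroup (Equiv.Perm (Fin n))) :
    IntermediateField k K where
  carrier := {x : K | ∀ σ ∈ H, Φ σ x = x}
  mul_mem' := by
    intro a b ha hb σ hσ
    rw [map_mul, ha σ hσ, hb σ hσ]
  one_mem' := by intro σ hσ; rw [map_one]
  add_mem' := by
    intro a b ha hb σ hσ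
    rw [map_add, ha σ hσ, hb σ hσ]
  zero_mem' := by intro σ hσ; rw [map_zero]
  algebraMap_mem' := by intro r σ hσ; exact (Φ σ).commutes r
  inv_mem' := by
    intro x hx σ hσ
    rw [map_inv₀, hx σ hσ]

/-!
The polynomial `∏ (X - αᵢ)` is separable with coefficients in `k` and its roots generate `K`, so
`K/k` is finite Galois, and every `k`-automorphism of `K` permutes the `αᵢ` by some `τ ∈ G`, hence
equals `Φ τ`. For `g ∈ G`, `Φ g` sends `β_{σH}` to `β_{gσH}`; by injectivity on the orbit it fixes
`β_{σH}` exactly when `gσH = σH`, i.e. `g ∈ σHσ⁻¹`. So the stabilizer of `β_{σH}` in `Aut(K/k)` is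
`Φ(G ∩ σHσ⁻¹)`, and by the Galois correspondence `k⟮β_{σH}⟯` is the fixed field of that stabilizer.
-/

open IntermediateField

theorem AlgEquiv.ext_of_adjoin_eq_top {R A B : Type*} [CommSemiring R] [Semiring A] [Semiring B]
    [Algebra R A] [Algebra R B] {s : Set A} (h : Algebra.adjoin R s = ⊤) {φ ψ : A ≃ₐ[R] B}
    (hs : s.EqOn φ ψ) : φ = ψ :=
  AlgEquiv.coe_toAlgHom_injective (AlgHom.ext_of_adjoin_eq_top h hs)

theorem MvPolynomial.aeval_rename_eq_of_apply_eq {R A B ι κ : Type*} [CommSemiring R]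
    [CommSemiring A] [CommSemiring B] [Algebra R A] [Algebra R B] {α : ι → A} {β : κ → B}
    {φ : A →ₐ[R] B} {τ : ι → κ} (h : ∀ i, φ (α i) = β (τ i)) (q : MvPolynomial ι R) :
    aeval β (rename τ q) = φ (aeval α q) := by
  rw [aeval_rename, comp_aeval_apply]
  simp only [h, Function.comp_def]

theorem smul_mk_eq_mk_iff {G : Type*} [Group G] (H : Subgroup G) (g a : G) :
    g • (a : G ⧸ H) = a ↔ a⁻¹ * g * a ∈ H := by
  rw [MulAction.Quotient.smul_mk, QuotientGroup.eq, ← inv_mem_iff]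
  simp [mul_assoc]

theorem mem_map_conj_iff {G : Type*} [Group G] (H : Subgroup G) (a g : G) :
    g ∈ H.map (MulAut.conj a).toMonoidHom ↔ a⁻¹ * g * a ∈ H := by
  rw [Subgroup.mem_map_equiv]
  simp [mul_assoc]

theorem smul_mk_subgroupOf_eq_iff {G : Type*} [Group G] {H L : Subgroup G} (g a : L) :
    g • (a : L ⧸ H.subgroupOf L) = a ↔ (g : G) ∈ H.map (MulAut.conj (a : G)).toMonoidHom := by
  rw [smul_mk_eq_mk_iff, Subgroup.mem_subgroupOf, mem_map_conj_iff]
  simp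

theorem IntermediateField.fixingSubgroup_adjoin_simple (x : K) :
    k⟮x⟯.fixingSubgroup = MulAction.stabilizer (K ≃ₐ[k] K) x := by
  refine le_antisymm
    (fun φ hφ => (mem_fixingSubgroup_iff _ _).1 hφ x (mem_adjoin_simple_self k x)) ?_
  rw [← le_iff_le, adjoin_simple_le_iff]
  exact fun φ => φ.2

theorem IntermediateField.adjoin_simple_eq_fixedField_stabilizer [FiniteDimensional k K]
    [IsGalois k K] (x : K) : k⟮x⟯ = fixedField (MulAction.stabilizer (K ≃ₐ[k] K) x) := by
  rw [← fixingSubgroup_adjoin_simple, IsGalois.fixedField_fixingSubgroup]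

section RootsOfSeparableProduct

variable {k} {ι : Type*} [Fintype ι] {α : ι → K} {p : k[X]}

theorem rootSet_eq_range
    (hp : p.map (algebraMap k K) = ∏ i, (Polynomial.X - Polynomial.C (α i))) :
    p.rootSet K = Set.range α := by
  classical
  have hne : ∏ i, (Polynomial.X - Polynomial.C (α i)) ≠ 0 :=
    (monic_prod_of_monic _ _ fun i _ => monic_X_sub_C (α i)).ne_zero
  ext x
  simp [rootSet, aroots, hp, Polynomial.roots_prod _ _ hne]

theorem isGalois_of_map_eq_prod_X_sub_C (hinj : Function.Injective α)
    (hp : p.map (algebraMap k K) = ∏ i, (Polynomial.X - Polynomial.C (α i)))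
    (hgen : Algebra.adjoin k (Set.range α) = ⊤) : FiniteDimensional k K ∧ IsGalois k K := by
  have : p.IsSplittingField k K :=
    ⟨hp ▸ Splits.prod fun i _ => Splits.X_sub_C _, by rw [rootSet_eq_range hp, hgen]⟩
  have hsep : p.Separable := by
    rw [← separable_map (algebraMap k K), hp]
    exact separable_prod_X_sub_C_iff.mpr hinj
  exact ⟨IsSplittingField.finiteDimensional K p, IsGalois.of_separable_splitting_field hsep⟩

theorem exists_perm_apply_eq_of_map_eq_prod_X_sub_C (hinj : Function.Injective α)
    (hp : p.map (algebraMap k K) = ∏ i, (Polynomial.X - Polynomial.C (α i))) (φ : K →ₐ[k] K) :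
    ∃ τ : Equiv.Perm ι, ∀ i, φ (α i) = α (τ i) := by
  have hroot : ∀ i, ∃ j, φ (α i) = α j := fun i => by
    have hαi : α i ∈ p.rootSet K := rootSet_eq_range hp ▸ ⟨i, rfl⟩
    obtain ⟨j, hj⟩ : φ (α i) ∈ Set.range α := rootSet_eq_range hp ▸ rootSet_mapsTo φ hαi
    exact ⟨j, hj.symm⟩
  choose t ht using hroot
  have ht_inj : Function.Injective t := fun i j hij =>
    hinj <| φ.injective (by rw [ht, ht, hij] : φ (α i) = φ (α j))
  exact ⟨Equiv.ofBijective t (Finite.injective_iff_bijective.mp ht_inj), ht⟩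

end RootsOfSeparableProduct

section GaloisGroup

variable {k} {α : Fin n → K}

theorem rename_mem_relIdeal_iff {φ : K →ₐ[k] K} {τ : Equiv.Perm (Fin n)}
    (h : ∀ i, φ (α i) = α (τ i)) (q : MvPolynomial (Fin n) k) :
    rename τ q ∈ relIdeal k α ↔ q ∈ relIdeal k α := by
  simp only [relIdeal, RingHom.mem_ker, aeval_rename_eq_of_apply_eq h,
    map_eq_zero_iff φ φ.injective]

theorem mem_galoisGroup_of_apply_eq {φ : K →ₐ[k] K} {τ : Equiv.Perm (Fin n)}
    (h : ∀ i, φ (α i) = α (τ i)) : τ ∈ galoisGroup k α := by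
  show rename τ '' _ = _
  ext q
  have hinv : rename τ (rename τ.symm q) = q := by
    rw [rename_rename, Equiv.self_comp_symm, rename_id_apply]
  refine ⟨?_, fun hq => ⟨rename τ.symm q, ?_, hinv⟩⟩
  · rintro ⟨q, hq, rfl⟩
    exact (rename_mem_relIdeal_iff h q).2 hq
  · exact (rename_mem_relIdeal_iff h _).1 (by rw [hinv]; exact hq)

theorem exists_mem_galoisGroup_eq {p : k[X]} (hinj : Function.Injective α)
    (hp : p.map (algebraMap k K) = ∏ i, (Polynomial.X - Polynomial.C (α i)))
    (hgen : Algebra.adjoin k (Set.range α) = ⊤) {Φ : Equiv.Perm (Fin n) → (K ≃ₐ[k] K)}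
    (hΦ : ∀ τ ∈ galoisGroup k α, ∀ i, Φ τ (α i) = α (τ i)) (φ : K ≃ₐ[k] K) :
    ∃ τ ∈ galoisGroup k α, Φ τ = φ := by
  obtain ⟨τ, hτ⟩ := exists_perm_apply_eq_of_map_eq_prod_X_sub_C hinj hp φ.toAlgHom
  have hτG : τ ∈ galoisGroup k α := mem_galoisGroup_of_apply_eq hτ
  refine ⟨τ, hτG, AlgEquiv.ext_of_adjoin_eq_top hgen ?_⟩
  rintro _ ⟨i, rfl⟩
  rw [hΦ τ hτG]
  exact (hτ i).symm

end GaloisGroup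

section FixedField

variable {k} {Φ : Equiv.Perm (Fin n) → (K ≃ₐ[k] K)}

theorem fixedIF_eq_fixedField {S : Subgroup (Equiv.Perm (Fin n))} {T : Subgroup (K ≃ₐ[k] K)}
    (h : (T : Set (K ≃ₐ[k] K)) = Φ '' S) : fixedIF k Φ S = fixedField T := by
  ext x
  rw [mem_fixedField_iff]
  change (∀ σ ∈ S, Φ σ x = x) ↔ ∀ φ ∈ T, φ x = x
  simp only [← SetLike.mem_coe, h, Set.forall_mem_image]

theorem fixedIF_bot (h : Φ 1 = 1) : fixedIF k Φ ⊥ = ⊤ :=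
  eq_top_iff.2 fun x _ σ hσ => by rw [Subgroup.mem_bot.1 hσ, h]; rfl

end FixedField

section Resolvent

variable {k} {α : Fin n → K} {L H : Subgroup (Equiv.Perm (Fin n))} {P : MvPolynomial (Fin n) k}
  {β : L ⧸ H.subgroupOf L → K}

theorem apply_resolvent_eq (hβ : ∀ σ : L, β σ = aeval α (rename (σ : Equiv.Perm (Fin n)) P))
    (φ : K →ₐ[k] K) (g : L) (h : ∀ i, φ (α i) = α ((g : Equiv.Perm (Fin n)) i)) (σ : L) :
    φ (β σ) = β (g • (σ : L ⧸ H.subgroupOf L)) := by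
  rw [MulAction.Quotient.smul_mk, hβ, hβ, ← aeval_rename_eq_of_apply_eq h, rename_rename]
  rfl

end Resolvent

theorem adjoin_root_resolvent_eq_fixedField
    (α : Fin n → K) (hinj : Function.Injective α)
    (hcoeff : ∀ m : ℕ, (∏ i : Fin n, (Polynomial.X - Polynomial.C (α i)) : K[X]).coeff m ∈
      (algebraMap k K).range)
    (hgen : Algebra.adjoin k (Set.range α) = ⊤)
    (Φ : Equiv.Perm (Fin n) → (K ≃ₐ[k] K))
    (hΦ : ∀ τ ∈ galoisGroup k α, ∀ i : Fin n, Φ τ (α i) = α (τ i))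
    (H L : Subgroup (Equiv.Perm (Fin n))) (hGL : galoisGroup k α ≤ L)
    (P : MvPolynomial (Fin n) k)
    (β : (↥L ⧸ H.subgroupOf L) → K)
    (hβ : ∀ σ : ↥L, β (QuotientGroup.mk σ) =
      MvPolynomial.aeval α (rename ⇑(σ : Equiv.Perm (Fin n)) P))
    (σ : Equiv.Perm (Fin n)) (hσ : σ ∈ L)
    (O : Set (↥L ⧸ H.subgroupOf L))
    (hO : O = {C | ∃ (g : Equiv.Perm (Fin n)) (hg : g ∈ galoisGroup k α),
      (⟨g, hGL hg⟩ : ↥L) • (QuotientGroup.mk (⟨σ, hσ⟩ : ↥L) : ↥L ⧸ H.subgroupOf L) = C})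
    (hinjO : Set.InjOn β O) :
    IntermediateField.adjoin k {β (QuotientGroup.mk (⟨σ, hσ⟩ : ↥L))} =
      fixedIF k Φ (galoisGroup k α ⊓ Subgroup.map (MulAut.conj σ).toMonoidHom H) ∧
    (galoisGroup k α ⊓ Subgroup.map (MulAut.conj σ).toMonoidHom H = ⊥ →
      IntermediateField.adjoin k {β (QuotientGroup.mk (⟨σ, hσ⟩ : ↥L))} = ⊤) := by
  subst hO
  obtain ⟨p, hp⟩ := (mem_lifts _).mp ((lifts_iff_coeff_lifts _).mpr hcoeff)
  obtain ⟨_, _⟩ := isGalois_of_map_eq_prod_X_sub_C hinj hp hgen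
  set β₀ := β (QuotientGroup.mk (⟨σ, hσ⟩ : ↥L))
  have fixes_iff : ∀ g ∈ galoisGroup k α,
      Φ g β₀ = β₀ ↔ g ∈ H.map (MulAut.conj σ).toMonoidHom := by
    intro g hg
    rw [← smul_mk_subgroupOf_eq_iff ⟨g, hGL hg⟩ ⟨σ, hσ⟩,
      ← hinjO.eq_iff ⟨g, hg, rfl⟩ ⟨1, one_mem _, one_smul _ _⟩]
    exact Eq.congr_left (apply_resolvent_eq hβ (Φ g).toAlgHom ⟨g, hGL hg⟩ (hΦ g hg) _)
  have stabilizer_eq : (MulAction.stabilizer (K ≃ₐ[k] K) β₀ : Set (K ≃ₐ[k] K)) =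
      Φ '' (galoisGroup k α ⊓ H.map (MulAut.conj σ).toMonoidHom : Subgroup _) := by
    ext φ
    constructor
    · intro hφ
      obtain ⟨τ, hτ, rfl⟩ := exists_mem_galoisGroup_eq hinj hp hgen hΦ φ
      exact ⟨τ, ⟨hτ, (fixes_iff τ hτ).1 hφ⟩, rfl⟩
    · rintro ⟨g, ⟨hg, hgH⟩, rfl⟩
      exact (fixes_iff g hg).2 hgH
  have adjoin_eq := (adjoin_simple_eq_fixedField_stabilizer k β₀).trans
    (fixedIF_eq_fixedField stabilizer_eq).symm
  refine ⟨adjoin_eq, fun hbot => ?_⟩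
  have hΦ_one : Φ 1 = 1 := AlgEquiv.ext_of_adjoin_eq_top hgen <| by
    rintro _ ⟨i, rfl⟩
    exact hΦ 1 (one_mem _) i
  rw [adjoin_eq, hbot, fixedIF_bot hΦ_one]
end
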